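/- Let Σ be a finite nonempty alphabet. A regular language L of unranked Σ-labelled trees is sparse (i.e. the relative number of n-node unranked trees in L tends to 0) if and only if some unranked Σ-labelled tree S does not appear as a subtree of any tree T ∈ L. -/

import Mathlib

/-!
A tree `T` has the unranked tree `S = a(ts)` as a subtree iff `T^♭` has a node labelled `a`
whose left subtree is `ts^♭`.

If no tree of `L` has the subtree `S`, the encodings of `L` avoid this pattern. Let `p(n)` count
the avoiding binary trees with `n` nodes. Grafting a copy of the pattern above the left child of
`ℓ` chosen nodes of such a tree is injective, so `p(n) · C(n, ℓ)` is at most the number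
`≤ (4|Σ|)^(n + kℓ)` of binary trees with `n + kℓ` nodes, where `k = |S|`. Weighting by `y^ℓ`,
`y = (2 (4|Σ|)^k)⁻¹`, and summing over `ℓ` gives `p(n) (1 + y)^n ≤ 2 (4|Σ|)^n`, whereas there
are at least `(4|Σ|)^n / (8n²)` unranked trees with `n` nodes.

If every `S` is a subtree of some tree of `L`, every binary tree `B` occurs in an accepted tree,
so some run on `B` reaches a co-accessible state `q`. Plugging `B` into a fixed context of size
at most `M` leading from `q` to acceptance maps the trees with `m` nodes, up to the `|Q|`
possible states, injectively into the trees of `L` with between `m` and `m + M` nodes. As the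
number of trees grows by a factor of at most `4|Σ|` per node, `L` keeps density at least
`1 / (|Q| (4|Σ|)^M)` along infinitely many sizes.
-/

open Filter Topology

namespace Sparse

inductive BTree (α : Type*) where
  | nil : BTree α
  | node : α → BTree α → BTree α → BTree α

namespace BTree

variable {α : Type*}

/-- The number of nodes of a binary tree. -/
def size : BTree α → ℕ
  | nil => 0
  | node _ l r => size l + size r + 1

/-- `Subtree S T` means `S = T`, or `T` is nonempty and `S` is a subtree of the left or
right subtree of the root of `T`. -/
inductive Subtree : BTree α → BTree α → Prop where
  | refl (T : BTree α) : Subtree T T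
  | left {S l r : BTree α} {a : α} : Subtree S l → Subtree S (node a l r)
  | right {S l r : BTree α} {a : α} : Subtree S r → Subtree S (node a l r)

end BTree

variable {α : Type*}

/-- A run of a tree automaton with transition relation `Δ` on a binary tree: the empty tree is
assigned `none` (i.e. `⊥`), and a nonempty tree with root label `a` and run values `ql`, `qr` on
the two subtrees is assigned a state `q` with `(ql, qr, a, q) ∈ Δ`. -/
inductive Run {Q : Type*} (Δ : Option Q → Option Q → α → Q → Prop) :
    BTree α → Option Q → Prop where
  | nil : Run Δ BTree.nil none
  | node {a : α} {l r : BTree α} {ql qr : Option Q} {q : Q} :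
      Run Δ l ql → Run Δ r qr → Δ ql qr a q → Run Δ (BTree.node a l r) (some q)

/-- A tree automaton with transitions `Δ` and accepting states `F` accepts `T` if some run
assigns `T` a state in `F`. -/
def TAccepts {Q : Type*} (Δ : Option Q → Option Q → α → Q → Prop) (F : Set Q)
    (T : BTree α) : Prop :=
  ∃ q ∈ F, Run Δ T (some q)

/-- A tree language is regular iff it is the set of trees accepted by some tree automaton
with finitely many states. -/
def RegularTreeLang (L : Set (BTree α)) : Prop :=
  ∃ (Q : Type) (_ : Fintype Q) (Δ : Option Q → Option Q → α → Q → Prop) (F : Set Q),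
    L = {T | TAccepts Δ F T}

/-- The relative number of `n`-node trees in `L`:
`|L ∩ ℬ^Σ_n| / (C_n ⬝ |Σ|^n)`, where `C_n` is the `n`-th Catalan number. -/
noncomputable def density [Fintype α] (L : Set (BTree α)) (n : ℕ) : ℝ :=
  (Nat.card {T : BTree α // T ∈ L ∧ T.size = n} : ℝ) /
    ((catalan n : ℝ) * (Fintype.card α : ℝ) ^ n)

/-- `L` has asymptotic density `c` if `density L n` tends to `c` as `n → ∞`. -/
def HasDensity [Fintype α] (L : Set (BTree α)) (c : ℝ) : Prop :=
  Tendsto (density L) atTop (𝓝 c)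

/-- The upper asymptotic density `P̄_lim(L) = limsup_n density L n`. -/
noncomputable def upperDensity [Fintype α] (L : Set (BTree α)) : ℝ :=
  limsup (density L) atTop

/-- `LT = {conc_a(S, T) : a ∈ Σ, S ∈ L}`. -/
def concL (L : Set (BTree α)) (T : BTree α) : Set (BTree α) :=
  {X | ∃ (a : α) (S : BTree α), S ∈ L ∧ X = BTree.node a S T}

/-- `LT⁻¹ = {S : ∃ a, conc_a(S, T) ∈ L}`. -/
def quotR (L : Set (BTree α)) (T : BTree α) : Set (BTree α) :=
  {S | ∃ a : α, BTree.node a S T ∈ L}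

/-- `T⁻¹L = {S : ∃ a, conc_a(T, S) ∈ L}`. -/
def quotL (T : BTree α) (L : Set (BTree α)) : Set (BTree α) :=
  {S | ∃ a : α, BTree.node a T S ∈ L}

/-- `L[T_k, …, T_1]⁻¹`, where the list is `[T_k, …, T_1]` (so the head is `T_k`):
`L[]⁻¹ = L` and `L[T_k,…,T_1]⁻¹ = (L[T_{k-1},…,T_1]⁻¹)T_k⁻¹ ∪ T_k⁻¹(L[T_{k-1},…,T_1]⁻¹)`. -/
def quotIter (L : Set (BTree α)) : List (BTree α) → Set (BTree α)
  | [] => L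
  | T :: Ts => quotR (quotIter L Ts) T ∪ quotL T (quotIter L Ts)

/-- A state `q` is reachable if some run of the automaton on some tree assigns `q` to the tree. -/
def TReachable {Q : Type*} (Δ : Option Q → Option Q → α → Q → Prop) (q : Q) : Prop :=
  ∃ T : BTree α, Run Δ T (some q)

/-- A set of states `V` is a sink if every transition involving a state of `V` as one of the
two child values leads into `V`. -/
def Sink {Q : Type*} (Δ : Option Q → Option Q → α → Q → Prop) (V : Set Q) : Prop :=
  ∀ q ∈ V, ∀ (q' : Option Q) (a : α) (q'' : Q),
    (Δ (some q) q' a q'' ∨ Δ q' (some q) a q'') → q'' ∈ V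

/-- Unranked Σ-labelled trees: a root label together with a finite ordered list of subtrees. -/
inductive UTree (α : Type*) where
  | node : α → List (UTree α) → UTree α

/-- The number of nodes of an unranked tree. -/
def usize : UTree α → ℕ
  | .node _ ts => 1 + (ts.attach.map (fun t => usize t.1)).sum
decreasing_by
  have := List.sizeOf_lt_of_mem t.2
  cases t; simp_all; omega

/-- `USubtree S T`: `S` consists of a node of `T` together with all its descendants. -/
inductive USubtree : UTree α → UTree α → Prop where
  | refl (T : UTree α) : USubtree T T
  | child {S T : UTree α} {a : α} {ts : List (UTree α)} :
      T ∈ ts → USubtree S T → USubtree S (UTree.node a ts)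

/-- First-child/next-sibling encoding of a forest of unranked trees as a binary tree. -/
def encodeF : List (UTree α) → BTree α
  | [] => BTree.nil
  | (UTree.node a ts) :: rest => BTree.node a (encodeF ts) (encodeF rest)

/-- The binary encoding `T^♭` of an unranked tree `T` (its root has no right child). -/
def encodeU (T : UTree α) : BTree α := encodeF [T]


namespace BTree

theorem size_eq_zero_iff {B : BTree α} : B.size = 0 ↔ B = nil := by
  cases B <;> simp [size]

theorem finite_setOf_size_le [Finite α] (n : ℕ) : {B : BTree α | B.size ≤ n}.Finite := by
  induction n with
  | zero =>
    exact (Set.finite_singleton nil).subset fun B hB => size_eq_zero_iff.mp (Nat.le_zero.mp hB)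
  | succ n ih =>
    refine (((Set.finite_univ (α := α)).prod (ih.prod ih)).image
      fun x => node x.1 x.2.1 x.2.2).insert nil |>.subset ?_
    rintro (_ | ⟨a, l, r⟩) hB
    · exact Set.mem_insert _ _
    · have hB : l.size + r.size + 1 ≤ n + 1 := hB
      exact Set.mem_insert_of_mem _
        ⟨(a, l, r), ⟨trivial, show l.size ≤ n by omega, show r.size ≤ n by omega⟩, rfl⟩

instance finite_subtype_size_eq [Finite α] (n : ℕ) : Finite {B : BTree α // B.size = n} :=
  ((finite_setOf_size_le n).subset fun _ hB => le_of_eq hB).to_subtype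

instance finite_subtype_and_size_eq [Finite α] (p : BTree α → Prop) (n : ℕ) :
    Finite {B : BTree α // p B ∧ B.size = n} :=
  ((finite_setOf_size_le n).subset fun _ hB => hB.2.le).to_subtype

def sizeSuccEquiv (n : ℕ) : {B : BTree α // B.size = n + 1} ≃
    Σ i : Fin (n + 1), α × {B : BTree α // B.size = i} × {B : BTree α // B.size = n - i} where
  toFun
    | ⟨nil, h⟩ => absurd h (by simp [size])
    | ⟨node a l r, h⟩ => ⟨⟨l.size, by simp only [size] at h; omega⟩, a, ⟨l, rfl⟩,
        ⟨r, by simp only [size] at h; simp only; omega⟩⟩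
  invFun
    | ⟨i, a, ⟨l, hl⟩, ⟨r, hr⟩⟩ => ⟨node a l r, by simp only [size]; omega⟩
  left_inv := by
    rintro ⟨_ | ⟨a, l, r⟩, h⟩
    · simp [size] at h
    · rfl
  right_inv := by
    rintro ⟨⟨i, hi⟩, a, ⟨l, hl⟩, ⟨r, hr⟩⟩
    obtain rfl : l.size = i := hl
    rfl

end BTree

variable (α) in
noncomputable def numBTrees (n : ℕ) : ℕ := Nat.card {B : BTree α // B.size = n}

variable (α) in
noncomputable def numUTrees (n : ℕ) : ℕ := Nat.card {T : UTree α // usize T = n}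

theorem numBTrees_zero : numBTrees α 0 = 1 := by
  rw [numBTrees, Nat.card_eq_one_iff_exists]
  exact ⟨⟨.nil, rfl⟩, fun ⟨B, h⟩ => Subtype.ext (BTree.size_eq_zero_iff.mp h)⟩

theorem numBTrees_succ [Fintype α] (n : ℕ) :
    numBTrees α (n + 1) =
      ∑ i : Fin (n + 1), Fintype.card α * (numBTrees α i * numBTrees α (n - i)) := by
  rw [numBTrees, Nat.card_congr (BTree.sizeSuccEquiv n), Nat.card_sigma]
  simp only [Nat.card_prod, Nat.card_eq_fintype_card (α := α), numBTrees]

theorem numBTrees_eq [Fintype α] (n : ℕ) :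
    numBTrees α n = Fintype.card α ^ n * catalan n := by
  induction n using Nat.strong_induction_on with
  | _ n ih =>
    rcases n with _ | n
    · simp [numBTrees_zero]
    rw [numBTrees_succ, catalan_succ, Finset.mul_sum]
    refine Finset.sum_congr rfl fun i _ => ?_
    rw [ih i (by omega), ih (n - i) (by omega)]
    have : Fintype.card α ^ (n + 1) = Fintype.card α * Fintype.card α ^ (i : ℕ) *
        Fintype.card α ^ (n - i) := by
      rw [mul_assoc, ← pow_add, ← pow_succ', Nat.add_sub_cancel' (by omega)]
    rw [this]
    ring

def decodeF : BTree α → List (UTree α)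
  | .nil => []
  | .node a l r => UTree.node a (decodeF l) :: decodeF r

theorem encodeF_decodeF (B : BTree α) : encodeF (decodeF B) = B := by
  induction B with
  | nil => simp [decodeF, encodeF]
  | node a l r ihl ihr => simp [decodeF, encodeF, ihl, ihr]

theorem decodeF_encodeF (F : List (UTree α)) : decodeF (encodeF F) = F := by
  induction F using encodeF.induct with
  | case1 => simp [encodeF, decodeF]
  | case2 a ts rest ihts ihrest => simp [encodeF, decodeF, ihts, ihrest]

theorem encodeF_injective : Function.Injective (encodeF (α := α)) :=
  Function.LeftInverse.injective decodeF_encodeF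

theorem encodeU_injective : Function.Injective (encodeU (α := α)) := fun _ _ h => by
  simpa using encodeF_injective h

theorem usize_node (a : α) (ts : List (UTree α)) :
    usize (UTree.node a ts) = 1 + (ts.map usize).sum := by
  rw [usize, List.attach_map_val]

theorem size_encodeF (F : List (UTree α)) : (encodeF F).size = (F.map usize).sum := by
  induction F using encodeF.induct with
  | case1 => simp [encodeF, BTree.size]
  | case2 a ts rest ihts ihrest =>
    simp only [encodeF, BTree.size, ihts, ihrest, List.map_cons, List.sum_cons, usize_node]
    omega

theorem size_encodeU (T : UTree α) : (encodeU T).size = usize T := by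
  simp [encodeU, size_encodeF]

def usizeSuccEquiv (m : ℕ) :
    {T : UTree α // usize T = m + 1} ≃ α × {B : BTree α // B.size = m} where
  toFun
    | ⟨.node a ts, h⟩ =>
      (a, ⟨encodeF ts, by rw [usize_node] at h; rw [size_encodeF]; omega⟩)
  invFun
    | (a, ⟨B, hB⟩) => ⟨.node a (decodeF B), by
        rw [usize_node, ← size_encodeF, encodeF_decodeF]; omega⟩
  left_inv := by
    rintro ⟨⟨a, ts⟩, h⟩
    simp [decodeF_encodeF]
  right_inv := by
    rintro ⟨a, B, hB⟩
    simp [encodeF_decodeF]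

theorem numUTrees_succ [Fintype α] (m : ℕ) :
    numUTrees α (m + 1) = Fintype.card α * numBTrees α m := by
  rw [numUTrees, Nat.card_congr (usizeSuccEquiv m), Nat.card_prod, Nat.card_eq_fintype_card,
    numBTrees]

theorem card_image_encodeU (L : Set (UTree α)) (n : ℕ) :
    Nat.card {B : BTree α // B ∈ encodeU '' L ∧ B.size = n} =
      Nat.card {T : UTree α // T ∈ L ∧ usize T = n} := by
  refine (Nat.card_congr (Equiv.ofBijective
    (fun T => ⟨encodeU T.1, Set.mem_image_of_mem _ T.2.1, (size_encodeU _).trans T.2.2⟩)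
    ⟨fun _ _ h => Subtype.ext (encodeU_injective (congrArg Subtype.val h)), ?_⟩)).symm
  rintro ⟨_, ⟨T, hT, rfl⟩, hn⟩
  exact ⟨⟨T, hT, (size_encodeU T).symm.trans hn⟩, rfl⟩

theorem succ_succ_mul_catalan_succ (n : ℕ) :
    (n + 2) * catalan (n + 1) = 2 * (2 * n + 1) * catalan n := by
  refine Nat.eq_of_mul_eq_mul_left (Nat.succ_pos n) ?_
  calc (n + 1) * ((n + 2) * catalan (n + 1))
      = (n + 1) * Nat.centralBinom (n + 1) := by rw [← succ_mul_catalan_eq_centralBinom]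
    _ = 2 * (2 * n + 1) * Nat.centralBinom n := Nat.succ_mul_centralBinom_succ n
    _ = (n + 1) * (2 * (2 * n + 1) * catalan n) := by
      rw [← succ_mul_catalan_eq_centralBinom]; ring

theorem catalan_succ_le_four_mul (n : ℕ) : catalan (n + 1) ≤ 4 * catalan n :=
  Nat.le_of_mul_le_mul_left (by nlinarith [succ_succ_mul_catalan_succ n]) (by omega : 0 < n + 2)

theorem catalan_le_four_pow (n : ℕ) : catalan n ≤ 4 ^ n :=
  calc catalan n ≤ (n + 1) * catalan n := Nat.le_mul_of_pos_left _ n.succ_pos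
    _ = n.centralBinom := succ_mul_catalan_eq_centralBinom n
    _ ≤ 4 ^ n := Nat.centralBinom_le_four_pow n

theorem four_pow_le_catalan (n : ℕ) : 4 ^ n ≤ 2 * (n + 1) ^ 2 * catalan n := by
  rcases Nat.eq_zero_or_pos n with rfl | hn
  · simp
  calc 4 ^ n ≤ 2 * n * n.centralBinom := Nat.four_pow_le_two_mul_self_mul_centralBinom n hn
    _ = 2 * n * ((n + 1) * catalan n) := by rw [succ_mul_catalan_eq_centralBinom]
    _ ≤ 2 * (n + 1) ^ 2 * catalan n := by nlinarith [Nat.zero_le (catalan n)]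

theorem catalan_pos (n : ℕ) : 0 < catalan n :=
  Nat.pos_of_mul_pos_left ((succ_mul_catalan_eq_centralBinom n).symm ▸ n.centralBinom_pos)

section Counting

variable [Fintype α]

theorem numBTrees_le_pow (n : ℕ) : numBTrees α n ≤ (4 * Fintype.card α) ^ n := by
  rw [numBTrees_eq, mul_pow, mul_comm]
  exact Nat.mul_le_mul_right _ (catalan_le_four_pow n)

theorem numBTrees_succ_le (n : ℕ) :
    numBTrees α (n + 1) ≤ 4 * Fintype.card α * numBTrees α n := by
  rw [numBTrees_eq, numBTrees_eq]
  calc Fintype.card α ^ (n + 1) * catalan (n + 1)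
      ≤ Fintype.card α ^ (n + 1) * (4 * catalan n) := by
        gcongr; exact catalan_succ_le_four_mul n
    _ = 4 * Fintype.card α * (Fintype.card α ^ n * catalan n) := by ring

theorem numUTrees_le_pow_mul (m d : ℕ) :
    numUTrees α (m + 1 + d) ≤ (4 * Fintype.card α) ^ d * numUTrees α (m + 1) := by
  induction d with
  | zero => simp
  | succ d ih =>
    rw [show m + 1 + (d + 1) = (m + d + 1) + 1 by omega, numUTrees_succ, pow_succ]
    rw [show m + 1 + d = (m + d) + 1 by omega, numUTrees_succ] at ih
    nlinarith [numBTrees_succ_le (α := α) (m + d)]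

theorem pow_le_numUTrees [Nonempty α] {n : ℕ} (hn : 0 < n) :
    (4 * Fintype.card α) ^ n ≤ 8 * n ^ 2 * numUTrees α n := by
  obtain ⟨m, rfl⟩ := Nat.exists_eq_add_of_lt hn
  rw [zero_add, numUTrees_succ, numBTrees_eq]
  have hs : 0 < Fintype.card α := Fintype.card_pos
  calc (4 * Fintype.card α) ^ (m + 1)
      = 4 * Fintype.card α * (4 ^ m * Fintype.card α ^ m) := by ring
    _ ≤ 4 * Fintype.card α * (2 * (m + 1) ^ 2 * catalan m * Fintype.card α ^ m) := by
      gcongr; exact four_pow_le_catalan m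
    _ = 8 * (m + 1) ^ 2 * (Fintype.card α * (Fintype.card α ^ m * catalan m)) := by ring

theorem numUTrees_pos [Nonempty α] {n : ℕ} (hn : 0 < n) : 0 < numUTrees α n := by
  obtain ⟨m, rfl⟩ := Nat.exists_eq_add_of_lt hn
  rw [zero_add, numUTrees_succ, numBTrees_eq]
  have := catalan_pos m
  positivity

end Counting

namespace BTree

theorem Subtree.trans {A B C : BTree α} (hAB : Subtree A B) (hBC : Subtree B C) :
    Subtree A C := by
  induction hBC with
  | refl => exact hAB
  | left _ ih => exact .left ih
  | right _ ih => exact .right ih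

def HasNodeWithLeft (a : α) (P B : BTree α) : Prop := ∃ R, Subtree (node a P R) B

end BTree

open BTree

theorem exists_subtree_encodeF_of_mem {t : UTree α} {F : List (UTree α)} (ht : t ∈ F) :
    ∃ rest, Subtree (encodeF (t :: rest)) (encodeF F) := by
  induction F with
  | nil => cases ht
  | cons u F ih =>
    obtain rfl | ht := List.mem_cons.mp ht
    · exact ⟨F, .refl _⟩
    · obtain ⟨rest, h⟩ := ih ht
      obtain ⟨a, ts⟩ := u
      exact ⟨rest, by rw [encodeF]; exact .right h⟩

theorem USubtree.exists_subtree_encodeF {S t : UTree α} (h : USubtree S t) {F : List (UTree α)}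
    (ht : t ∈ F) : ∃ rest, Subtree (encodeF (S :: rest)) (encodeF F) := by
  induction h generalizing F with
  | refl => exact exists_subtree_encodeF_of_mem ht
  | child hmem _ ih =>
    obtain ⟨rest, hS⟩ := ih hmem
    obtain ⟨rest', ht⟩ := exists_subtree_encodeF_of_mem ht
    rw [encodeF] at ht
    exact ⟨rest, hS.trans ((Subtree.left (.refl _)).trans ht)⟩

theorem BTree.Subtree.exists_usubtree_decodeF {X B : BTree α} (h : Subtree X B) :
    ∀ t ∈ decodeF X, ∃ t' ∈ decodeF B, USubtree t t' := by
  induction h with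
  | refl => exact fun t ht => ⟨t, ht, .refl t⟩
  | left _ ih =>
    intro t ht
    obtain ⟨t', ht', hsub⟩ := ih t ht
    exact ⟨_, List.mem_cons_self, .child ht' hsub⟩
  | right _ ih =>
    intro t ht
    obtain ⟨t', ht', hsub⟩ := ih t ht
    exact ⟨t', List.mem_cons_of_mem _ ht', hsub⟩

theorem hasNodeWithLeft_encodeU_iff {a : α} {ts : List (UTree α)} {T : UTree α} :
    HasNodeWithLeft a (encodeF ts) (encodeU T) ↔ USubtree (.node a ts) T := by
  constructor
  · rintro ⟨R, h⟩
    obtain ⟨t', ht', hsub⟩ := h.exists_usubtree_decodeF _ List.mem_cons_self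
    rw [encodeU, decodeF_encodeF, List.mem_singleton] at ht'
    rwa [decodeF_encodeF, ht'] at hsub
  · intro h
    obtain ⟨rest, hsub⟩ := h.exists_subtree_encodeF (List.mem_singleton_self T)
    rw [encodeF] at hsub
    exact ⟨_, hsub⟩

instance finite_subtype_length_eq_and {β : Type*} [Finite β] (n : ℕ) (p : List β → Prop) :
    Finite {l : List β // l.length = n ∧ p l} :=
  ((List.finite_length_eq β n).subset fun _ h => h.1).to_subtype

def listConsEquiv (p : List Bool → Prop) (n : ℕ) :
    {l : List Bool // l.length = n + 1 ∧ p l} ≃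
      Σ b : Bool, {t : List Bool // t.length = n ∧ p (b :: t)} where
  toFun
    | ⟨[], h⟩ => absurd h.1 (by simp)
    | ⟨b :: t, h⟩ => ⟨b, t, by simpa using h.1, h.2⟩
  invFun
    | ⟨b, t, h⟩ => ⟨b :: t, by simpa using h.1, h.2⟩
  left_inv := by
    rintro ⟨_ | ⟨b, t⟩, h⟩
    · simp at h
    · rfl
  right_inv := by
    rintro ⟨b, t, h⟩
    rfl

theorem card_lists_count_true (n ℓ : ℕ) :
    Nat.card {l : List Bool // l.length = n ∧ l.count true = ℓ} = n.choose ℓ := by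
  induction n generalizing ℓ with
  | zero =>
    simp only [List.length_eq_zero_iff]
    rcases ℓ with _ | ℓ
    · exact Nat.card_eq_one_iff_exists.mpr
        ⟨⟨[], rfl, rfl⟩, fun ⟨l, hl, _⟩ => Subtype.ext hl⟩
    · have : IsEmpty {l : List Bool // l = [] ∧ l.count true = ℓ + 1} :=
        ⟨fun ⟨l, hl, hc⟩ => by simp [hl] at hc⟩
      exact Nat.card_of_isEmpty
  | succ n ih =>
    rw [Nat.card_congr (listConsEquiv _ n), Nat.card_sigma]
    simp only [List.count_cons, Fintype.sum_bool]
    rcases ℓ with _ | ℓ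
    · simp [ih]
    · simp [ih, Nat.choose_succ_succ]

theorem length_take_drop {β : Type*} {t : List β} {p q : ℕ} (h : t.length = p + q) :
    (t.take p).length = p ∧ (t.drop p).length = q := by
  simp only [List.length_take, List.length_drop]
  omega

namespace BTree

variable (a : α) (P : BTree α)

/-- Reading the marks `bs` in preorder, insert a node `a` with left subtree `P` above the left
child of every marked node. -/
def graft : BTree α → List Bool → BTree α
  | nil, _ => nil
  | node b l r, [] => node b l r
  | node b l r, m :: bs =>
    if m then node b (node a P (graft l (bs.take l.size))) (graft r (bs.drop l.size))
    else node b (graft l (bs.take l.size)) (graft r (bs.drop l.size))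

variable {a P}

theorem size_graft {B : BTree α} {bs : List Bool} (h : bs.length = B.size) :
    (graft a P B bs).size = B.size + (P.size + 1) * bs.count true := by
  induction B generalizing bs with
  | nil => simp_all [graft, size]
  | node b l r ihl ihr =>
    obtain _ | ⟨m, bs⟩ := bs
    · simp [size] at h
    simp only [size, List.length_cons, Nat.add_right_cancel_iff] at h
    have hl := ihl (length_take_drop h).1
    have hr := ihr (length_take_drop h).2
    have hc := List.count_append (a := true) (l₁ := bs.take l.size) (l₂ := bs.drop l.size)
    rw [List.take_append_drop] at hc
    cases m <;> simp [graft, size, hl, hr, hc] <;> ring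

theorem graft_of_true_not_mem {B : BTree α} {bs : List Bool} (h : true ∉ bs) :
    graft a P B bs = B := by
  induction B generalizing bs with
  | nil => rfl
  | node b l r ihl ihr =>
    obtain _ | ⟨m, bs⟩ := bs
    · rfl
    simp only [List.mem_cons, not_or] at h
    have hm : m = false := by simpa using Ne.symm h.1
    simp only [graft, hm, Bool.false_eq_true, if_false,
      ihl fun h' => h.2 (List.mem_of_mem_take h'), ihr fun h' => h.2 (List.mem_of_mem_drop h')]

theorem graft_ne_node {B : BTree α} (hB : ¬ HasNodeWithLeft a P B) {bs : List Bool}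
    (h : bs.length = B.size) (Z : BTree α) : graft a P B bs ≠ node a P Z := by
  obtain _ | ⟨c, l, r⟩ := B
  · simp [graft]
  obtain _ | ⟨m, bs⟩ := bs
  · simp [size] at h
  simp only [size, List.length_cons, Nat.add_right_cancel_iff] at h
  intro hg
  cases m
  · simp only [graft, Bool.false_eq_true, if_false, node.injEq] at hg
    obtain ⟨rfl, hl, -⟩ := hg
    -- a mark below would make the left subtree larger than `P`
    have hsize := congrArg size hl
    rw [size_graft (length_take_drop h).1] at hsize
    have hc : (bs.take l.size).count true = 0 := by nlinarith
    rw [graft_of_true_not_mem (List.count_eq_zero.mp hc)] at hl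
    exact hB ⟨r, by rw [hl]; exact .refl _⟩
  · simp only [graft, if_true, node.injEq] at hg
    have := congrArg size hg.2.1
    simp only [size] at this
    omega

theorem graft_injective {B B' : BTree α} {bs bs' : List Bool} (hB : ¬ HasNodeWithLeft a P B)
    (hB' : ¬ HasNodeWithLeft a P B') (h : bs.length = B.size) (h' : bs'.length = B'.size)
    (heq : graft a P B bs = graft a P B' bs') : B = B' ∧ bs = bs' := by
  induction B generalizing B' bs bs' with
  | nil =>
    obtain _ | ⟨b', l', r'⟩ := B'
    · simp_all [size]
    obtain _ | ⟨m', bs'⟩ := bs'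
    · simp [size] at h'
    cases m' <;> simp [graft] at heq
  | node b l r ihl ihr =>
    obtain _ | ⟨m, bs⟩ := bs
    · simp [size] at h
    obtain _ | ⟨b', l', r'⟩ := B'
    · cases m <;> simp [graft] at heq
    obtain _ | ⟨m', bs'⟩ := bs'
    · simp [size] at h'
    simp only [size, List.length_cons, Nat.add_right_cancel_iff] at h h'
    have hl : ¬ HasNodeWithLeft a P l := fun ⟨R, hR⟩ => hB ⟨R, .left hR⟩
    have hr : ¬ HasNodeWithLeft a P r := fun ⟨R, hR⟩ => hB ⟨R, .right hR⟩
    have hl' : ¬ HasNodeWithLeft a P l' := fun ⟨R, hR⟩ => hB' ⟨R, .left hR⟩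
    have hr' : ¬ HasNodeWithLeft a P r' := fun ⟨R, hR⟩ => hB' ⟨R, .right hR⟩
    suffices m = m' ∧ graft a P l (bs.take l.size) = graft a P l' (bs'.take l'.size) ∧
        b = b' ∧ graft a P r (bs.drop l.size) = graft a P r' (bs'.drop l'.size) by
      obtain ⟨rfl, hgl, rfl, hgr⟩ := this
      obtain ⟨rfl, htake⟩ := ihl hl hl' (length_take_drop h).1 (length_take_drop h').1 hgl
      obtain ⟨rfl, hdrop⟩ := ihr hr hr' (length_take_drop h).2 (length_take_drop h').2 hgr
      rw [← List.take_append_drop l.size bs, htake, hdrop, List.take_append_drop]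
      exact ⟨rfl, rfl⟩
    cases m <;> cases m' <;> simp only [graft, if_true, if_false, Bool.false_eq_true,
      node.injEq] at heq
    · exact ⟨rfl, heq.2.1, heq.1, heq.2.2⟩
    · exact absurd heq.2.1 (graft_ne_node hl (length_take_drop h).1 _)
    · exact absurd heq.2.1.symm (graft_ne_node hl' (length_take_drop h').1 _)
    · exact ⟨rfl, heq.2.1.2.2, heq.1, heq.2.2⟩

end BTree

noncomputable def numAvoiding (a : α) (P : BTree α) (n : ℕ) : ℕ :=
  Nat.card {B : BTree α // ¬ HasNodeWithLeft a P B ∧ B.size = n}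

theorem numAvoiding_mul_choose_le [Finite α] (a : α) (P : BTree α) (n ℓ : ℕ) :
    numAvoiding a P n * n.choose ℓ ≤ numBTrees α (n + (P.size + 1) * ℓ) := by
  rw [numAvoiding, ← card_lists_count_true, ← Nat.card_prod, numBTrees]
  refine Nat.card_le_card_of_injective
    (fun x => ⟨graft a P x.1.1 x.2.1, ?_⟩) fun x y hxy => ?_
  · rw [size_graft (x.2.2.1.trans x.1.2.2.symm), x.1.2.2, x.2.2.2]
  · obtain ⟨hB, hbs⟩ := graft_injective x.1.2.1 y.1.2.1 (x.2.2.1.trans x.1.2.2.symm)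
      (y.2.2.1.trans y.1.2.2.symm) (congrArg Subtype.val hxy)
    exact Prod.ext (Subtype.ext hB) (Subtype.ext hbs)

theorem mul_one_add_pow_le {p E : ℝ} (hE : 0 < E) {k n : ℕ}
    (h : ∀ ℓ ≤ n, p * n.choose ℓ ≤ E ^ (n + k * ℓ)) :
    p * (1 + (2 * E ^ k)⁻¹) ^ n ≤ 2 * E ^ n := by
  set y := (2 * E ^ k)⁻¹
  have hy : E ^ k * y = 1 / 2 := by
    simp only [y]; field_simp
  calc p * (1 + y) ^ n = ∑ ℓ ∈ Finset.range (n + 1), p * n.choose ℓ * y ^ ℓ := by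
        rw [add_comm, add_pow, Finset.mul_sum]
        refine Finset.sum_congr rfl fun ℓ _ => ?_
        ring
    _ ≤ ∑ ℓ ∈ Finset.range (n + 1), E ^ (n + k * ℓ) * y ^ ℓ := by
        gcongr with ℓ hℓ
        exact h ℓ (Nat.lt_succ_iff.mp (Finset.mem_range.mp hℓ))
    _ = E ^ n * ∑ ℓ ∈ Finset.range (n + 1), (1 / 2 : ℝ) ^ ℓ := by
        rw [Finset.mul_sum]
        refine Finset.sum_congr rfl fun ℓ _ => ?_
        rw [← hy, pow_add, pow_mul, mul_pow]
        ring
    _ ≤ E ^ n * 2 := by gcongr; exact sum_geometric_two_le _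
    _ = 2 * E ^ n := mul_comm _ _

theorem numAvoiding_mul_one_add_pow_le [Fintype α] [Nonempty α] (a : α) (P : BTree α)
    (n : ℕ) :
    numAvoiding a P n * (1 + (2 * (4 * Fintype.card α : ℝ) ^ (P.size + 1))⁻¹) ^ n ≤
      2 * (4 * Fintype.card α : ℝ) ^ n :=
  mul_one_add_pow_le (by positivity) fun ℓ _ => by
    exact_mod_cast (numAvoiding_mul_choose_le a P n ℓ).trans (numBTrees_le_pow _)

theorem card_le_numAvoiding [Finite α] {L : Set (UTree α)} {a : α} {ts : List (UTree α)}
    (hS : ∀ T ∈ L, ¬ USubtree (.node a ts) T) (n : ℕ) :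
    Nat.card {T : UTree α // T ∈ L ∧ usize T = n} ≤ numAvoiding a (encodeF ts) n :=
  Nat.card_le_card_of_injective
    (fun T => ⟨encodeU T.1, fun h => hS T.1 T.2.1 (hasNodeWithLeft_encodeU_iff.mp h),
      (size_encodeU _).trans T.2.2⟩)
    fun _ _ h => Subtype.ext (encodeU_injective (congrArg Subtype.val h))

theorem tendsto_card_div_numUTrees_zero [Fintype α] [Nonempty α] {L : Set (UTree α)}
    {S : UTree α} (hS : ∀ T ∈ L, ¬ USubtree S T) :
    Tendsto (fun n => (Nat.card {T : UTree α // T ∈ L ∧ usize T = n} : ℝ) / numUTrees α n)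
      atTop (𝓝 0) := by
  obtain ⟨a, ts⟩ := S
  set E : ℝ := 4 * Fintype.card α
  set ρ : ℝ := 1 + (2 * E ^ ((encodeF ts).size + 1))⁻¹
  have hρ : 1 < ρ := lt_add_of_pos_right 1 (by positivity)
  have hbound (n : ℕ) (hn : 0 < n) : (Nat.card {T : UTree α // T ∈ L ∧ usize T = n} : ℝ) ≤
      16 * ((n : ℝ) ^ 2 * ρ⁻¹ ^ n) * numUTrees α n := by
    have hnum : (Nat.card {T : UTree α // T ∈ L ∧ usize T = n} : ℝ) ≤
        numAvoiding a (encodeF ts) n := by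
      exact_mod_cast card_le_numAvoiding hS n
    have hden : E ^ n ≤ 8 * (n : ℝ) ^ 2 * numUTrees α n := by
      simp only [E]
      exact_mod_cast pow_le_numUTrees hn
    calc (Nat.card {T : UTree α // T ∈ L ∧ usize T = n} : ℝ)
        ≤ 2 * E ^ n / ρ ^ n := hnum.trans ((le_div_iff₀ (by positivity)).mpr
          (numAvoiding_mul_one_add_pow_le a (encodeF ts) n))
      _ ≤ 2 * (8 * (n : ℝ) ^ 2 * numUTrees α n) / ρ ^ n := by gcongr
      _ = 16 * ((n : ℝ) ^ 2 * ρ⁻¹ ^ n) * numUTrees α n := by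
        rw [inv_pow]; field_simp; ring
  have hρ' : |ρ⁻¹| < 1 := by
    rw [abs_of_pos (inv_pos.mpr (one_pos.trans hρ))]
    exact inv_lt_one_of_one_lt₀ hρ
  have hlim : Tendsto (fun n : ℕ => 16 * ((n : ℝ) ^ 2 * ρ⁻¹ ^ n)) atTop (𝓝 0) := by
    simpa using (tendsto_pow_const_mul_const_pow_of_abs_lt_one 2 hρ').const_mul 16
  refine squeeze_zero' (Eventually.of_forall fun n => by positivity) ?_ hlim
  filter_upwards [eventually_gt_atTop 0] with n hn
  rw [div_le_iff₀ (by exact_mod_cast numUTrees_pos hn)]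
  exact hbound n hn

inductive Ctx (α : Type*) where
  | hole : Ctx α
  | nodeL : α → Ctx α → BTree α → Ctx α
  | nodeR : α → BTree α → Ctx α → Ctx α

namespace Ctx

def fill : Ctx α → BTree α → BTree α
  | hole, B => B
  | nodeL a C r, B => .node a (fill C B) r
  | nodeR a l C, B => .node a l (fill C B)

def size : Ctx α → ℕ
  | hole => 0
  | nodeL _ C r => C.size + r.size + 1
  | nodeR _ l C => l.size + C.size + 1

theorem size_fill (C : Ctx α) (B : BTree α) : (C.fill B).size = C.size + B.size := by
  induction C with
  | hole => simp [fill, size]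
  | nodeL a C r ih => simp only [fill, size, BTree.size, ih]; omega
  | nodeR a l C ih => simp only [fill, size, BTree.size, ih]; omega

theorem fill_injective (C : Ctx α) : Function.Injective C.fill := by
  induction C with
  | hole => exact fun _ _ h => h
  | nodeL a C r ih => exact fun _ _ h => ih (BTree.node.inj h).2.1
  | nodeR a l C ih => exact fun _ _ h => ih (BTree.node.inj h).2.2

end Ctx

theorem BTree.Subtree.exists_fill {S B : BTree α} (h : Subtree S B) :
    ∃ C : Ctx α, B = C.fill S := by
  induction h with
  | refl => exact ⟨.hole, rfl⟩
  | @left _ r a _ ih =>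
    obtain ⟨C, rfl⟩ := ih
    exact ⟨.nodeL a C r, rfl⟩
  | @right l _ a _ ih =>
    obtain ⟨C, rfl⟩ := ih
    exact ⟨.nodeR a l C, rfl⟩

section Automaton

variable {Q : Type*} {Δ : Option Q → Option Q → α → Q → Prop}

variable (Δ) in
/-- `RunC Δ C p v`: a run on the context `C` that assumes the value `p` at the hole and assigns
`v` to the root. -/
inductive RunC : Ctx α → Option Q → Option Q → Prop
  | hole (p : Option Q) : RunC .hole p p
  | nodeL {a : α} {C : Ctx α} {r : BTree α} {p ql qr : Option Q} {q : Q} :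
      RunC C p ql → Run Δ r qr → Δ ql qr a q → RunC (.nodeL a C r) p (some q)
  | nodeR {a : α} {l : BTree α} {C : Ctx α} {p ql qr : Option Q} {q : Q} :
      Run Δ l ql → RunC C p qr → Δ ql qr a q → RunC (.nodeR a l C) p (some q)

theorem Run.exists_of_fill {C : Ctx α} {B : BTree α} {v : Option Q} (h : Run Δ (C.fill B) v) :
    ∃ p, Run Δ B p ∧ RunC Δ C p v := by
  induction C generalizing v with
  | hole => exact ⟨v, h, .hole v⟩
  | nodeL a C r ih =>
    obtain _ | ⟨hl, hr, hΔ⟩ := h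
    obtain ⟨p, hB, hC⟩ := ih hl
    exact ⟨p, hB, .nodeL hC hr hΔ⟩
  | nodeR a l C ih =>
    obtain _ | ⟨hl, hr, hΔ⟩ := h
    obtain ⟨p, hB, hC⟩ := ih hr
    exact ⟨p, hB, .nodeR hl hC hΔ⟩

theorem Run.fill {C : Ctx α} {B : BTree α} {p v : Option Q} (hB : Run Δ B p)
    (hC : RunC Δ C p v) : Run Δ (C.fill B) v := by
  induction hC with
  | hole => exact hB
  | nodeL _ hr hΔ ih => exact .node (ih hB) hr hΔ
  | nodeR hl _ hΔ ih => exact .node hl (ih hB) hΔ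

variable (Δ) in
def CoAccessible (F : Set Q) (q : Q) : Prop :=
  ∃ (C : Ctx α) (qf : Q), qf ∈ F ∧ RunC Δ C (some q) (some qf)

theorem exists_bounded_accepting_contexts [Finite Q] (F : Set Q) :
    ∃ (M : ℕ) (c : Q → Ctx α), ∀ q, (c q).size ≤ M ∧
      (CoAccessible Δ F q → ∃ qf ∈ F, RunC Δ (c q) (some q) (some qf)) := by
  have : ∀ q, ∃ C : Ctx α, CoAccessible Δ F q → ∃ qf ∈ F, RunC Δ C (some q) (some qf) := by
    intro q
    by_cases hq : CoAccessible Δ F q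
    · obtain ⟨C, qf, hqf, hC⟩ := hq
      exact ⟨C, fun _ => ⟨qf, hqf, hC⟩⟩
    · exact ⟨.hole, fun h => absurd h hq⟩
  choose c hc using this
  obtain ⟨M, hM⟩ := (Set.finite_range fun q => (c q).size).bddAbove
  exact ⟨M, c, fun q => ⟨hM ⟨q, rfl⟩, hc q⟩⟩

variable {F : Set Q} {L : Set (UTree α)}

theorem exists_run_coAccessible (hL : encodeU '' L = {X | TAccepts Δ F X})
    (hall : ∀ S, ∃ T ∈ L, USubtree S T) {B : BTree α} (hB : B ≠ .nil) :
    ∃ q, Run Δ B (some q) ∧ CoAccessible Δ F q := by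
  obtain _ | ⟨b, l, r⟩ := B
  · exact absurd rfl hB
  obtain ⟨T, hT, hsub⟩ := hall (.node b (decodeF (.node b l r)))
  obtain ⟨qf, hqf, hrun⟩ : encodeU T ∈ {X | TAccepts Δ F X} := hL ▸ Set.mem_image_of_mem _ hT
  obtain ⟨R, hR⟩ := hasNodeWithLeft_encodeU_iff.mpr hsub
  rw [encodeF_decodeF] at hR
  obtain ⟨C, hC⟩ := ((Subtree.left (.refl _)).trans hR).exists_fill
  rw [hC] at hrun
  obtain ⟨p, hp, hCp⟩ := hrun.exists_of_fill
  obtain _ | ⟨hl, hr, hΔ⟩ := hp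
  exact ⟨_, .node hl hr hΔ, C, qf, hqf, hCp⟩

theorem exists_numUTrees_le_card_mul [Finite α] [Fintype Q] [Nonempty Q]
    (hL : encodeU '' L = {X | TAccepts Δ F X}) (hall : ∀ S, ∃ T ∈ L, USubtree S T) :
    ∃ M, ∀ m, ∃ n, m ≤ n ∧ n ≤ m + M ∧
      numUTrees α m ≤ Fintype.card Q * Nat.card {T : UTree α // T ∈ L ∧ usize T = n} := by
  obtain ⟨M, c, hc⟩ := exists_bounded_accepting_contexts (α := α) (Δ := Δ) F
  refine ⟨M, fun m => ?_⟩
  choose q hq using fun U : {U : UTree α // usize U = m} =>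
    exists_run_coAccessible hL hall (B := encodeU U.1) (by
      obtain ⟨⟨_, _⟩, _⟩ := U
      simp [encodeU, encodeF])
  have hmem (U : {U : UTree α // usize U = m}) :
      (c (q U)).fill (encodeU U.1) ∈ encodeU '' L := by
    obtain ⟨qf, hqf, hC⟩ := (hc (q U)).2 (hq U).2
    rw [hL]
    exact ⟨qf, hqf, (hq U).1.fill hC⟩
  let g q := Nat.card {B : BTree α // B ∈ encodeU '' L ∧ B.size = m + (c q).size}
  obtain ⟨q₀, hq₀⟩ := Finite.exists_max g
  refine ⟨m + (c q₀).size, by omega, by have := (hc q₀).1; omega, ?_⟩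
  rw [← card_image_encodeU]
  calc numUTrees α m
      ≤ Nat.card (Σ q, {B : BTree α // B ∈ encodeU '' L ∧ B.size = m + (c q).size}) := by
        refine Nat.card_le_card_of_injective (fun U => ⟨q U, (c (q U)).fill (encodeU U.1),
          hmem U, by rw [Ctx.size_fill, size_encodeU, U.2, add_comm]⟩) fun U V hUV => ?_
        have hq : q U = q V := congrArg Sigma.fst hUV
        have hfill := congrArg (fun x => x.2.1) hUV
        simp only [hq] at hfill
        exact Subtype.ext (encodeU_injective (Ctx.fill_injective _ hfill))
    _ = ∑ q, g q := Nat.card_sigma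
    _ ≤ ∑ _q : Q, g q₀ := Finset.sum_le_sum fun q _ => hq₀ q
    _ = Fintype.card Q * g q₀ := by simp

end Automaton

theorem frequently_numUTrees_le_mul_card [Fintype α] [Nonempty α] {L : Set (UTree α)}
    (hreg : RegularTreeLang (encodeU '' L)) (hall : ∀ S, ∃ T ∈ L, USubtree S T) :
    ∃ K : ℕ, ∃ᶠ n in atTop,
      0 < numUTrees α n ∧ numUTrees α n ≤ K * Nat.card {T : UTree α // T ∈ L ∧ usize T = n} := by
  obtain ⟨Q, _, Δ, F, hL⟩ := hreg
  obtain ⟨a⟩ := ‹Nonempty α›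
  have : Nonempty Q :=
    ⟨(exists_run_coAccessible hL hall (B := .node a .nil .nil) nofun).choose⟩
  obtain ⟨M, hM⟩ := exists_numUTrees_le_card_mul hL hall
  refine ⟨(4 * Fintype.card α) ^ M * Fintype.card Q, frequently_atTop.mpr fun m => ?_⟩
  obtain ⟨n, hmn, hnM, hcard⟩ := hM (m + 1)
  refine ⟨n, by omega, numUTrees_pos (by omega), ?_⟩
  obtain ⟨d, rfl⟩ := Nat.exists_eq_add_of_le hmn
  calc numUTrees α (m + 1 + d)
      ≤ (4 * Fintype.card α) ^ d * numUTrees α (m + 1) := numUTrees_le_pow_mul m d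
    _ ≤ (4 * Fintype.card α) ^ M *
          (Fintype.card Q * Nat.card {T // T ∈ L ∧ usize T = m + 1 + d}) :=
        Nat.mul_le_mul (Nat.pow_le_pow_right (by positivity) (by omega)) hcard
    _ = _ := by ring

theorem not_tendsto_div_zero_of_frequently_le {a b : ℕ → ℕ} {K : ℕ}
    (h : ∃ᶠ n in atTop, 0 < a n ∧ a n ≤ K * b n) :
    ¬ Tendsto (fun n => (b n : ℝ) / a n) atTop (𝓝 0) := fun ht => by
  obtain ⟨n, ⟨hpos, hle⟩, hlt⟩ := (h.and_eventually
    (ht.eventually (gt_mem_nhds (by positivity : (0 : ℝ) < 1 / (K + 1))))).exists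
  rw [div_lt_div_iff₀ (by exact_mod_cast hpos) (by positivity)] at hlt
  have : (a n : ℝ) ≤ K * b n := by exact_mod_cast hle
  nlinarith [(b n).cast_nonneg (α := ℝ)]

/-- A regular language of unranked trees (i.e. one whose binary encoding
`L^♭ = {T^♭ : T ∈ L}` is a regular tree language) is sparse iff some unranked tree `S` does not
appear as a subtree of any tree of `L`. -/
theorem sparse_unranked_iff_forbidden_subtree {α : Type*} [Fintype α] [Nonempty α]
    (L : Set (UTree α)) (hreg : RegularTreeLang (encodeU '' L)) :
    Tendsto (fun n => (Nat.card {T : UTree α // T ∈ L ∧ usize T = n} : ℝ) /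
        (Nat.card {T : UTree α // usize T = n} : ℝ)) atTop (𝓝 0)
      ↔ ∃ S : UTree α, ∀ T ∈ L, ¬ USubtree S T := by
  constructor
  · intro hsparse
    by_contra! hall
    obtain ⟨K, hK⟩ := frequently_numUTrees_le_mul_card hreg hall
    exact not_tendsto_div_zero_of_frequently_le hK hsparse
  · rintro ⟨S, hS⟩
    exact tendsto_card_div_numUTrees_zero hS

end Sparse
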